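/- Let u : ℝ^3 × [0,T] → ℝ^3 be continuous in time and log-Lipschitz in space uniformly in time: there is L > 0 such that |u(x,t) − u(y,t)| ≤ L |x−y| (1 + |log|x−y||) whenever 0 < |x−y| ≤ 1. Then for each y ∈ ℝ^3 the ODE ẋ(t) = u(x(t),t), x(0) = y has a unique solution on [0,T], and the flow map y ↦ x(t,y) is Hölder continuous: there exist constants C > 0 and, for each t ∈ [0,T], an exponent α(t) = e^{−Lt} ∈ (0,1], such that |x(t,y) − x(t,z)| ≤ C |y−z|^{α(t)} for |y−z| ≤ 1. -/

import Mathlib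

/-!
For `r ≤ 1` the log-Lipschitz modulus is `ω(r) = r (1 - log r)`, which is increasing on `[0, 1]`
and satisfies Osgood's condition `∫₀ dr / ω(r) = ∞`. The solution of `ψ' = K ω(ψ)`, `ψ(0) = η`,
is `ψ(t) = exp (1 - (1 - log η) e^{-Kt}) ≤ e η^{e^{-Kt}}`, and a first-touching argument bounds
every `f ≥ 0` with `f(t) ≤ f(0) + ∫₀ᵗ K ω(f)` by `ψ` as long as `ψ ≤ 1`. Applied to the distance of
two solutions, this gives the Hölder bound with exponent `e^{-Kt}` for nearby data, and uniqueness
as `η → 0`; subdividing segments extends the bound to `|y - z| ≤ 1`.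

Existence is by Picard iteration: the distances between iterates are dominated by the iterates
`b_{n+1} = ∫ K ω(b_n)`, `b_0 = 1`, which decrease to a solution of `β = ∫ K ω(β)`, hence to `0` by
the same comparison. The log-Lipschitz bound and the boundedness of `u(·, 0)` on `[0, T]` give
linear growth of the field, which keeps the chain of local solutions bounded, so that they cover
`[0, T]`.
-/

open Real Set Filter MeasureTheory intervalIntegral Topology Metric

noncomputable def logLipModulus (r : ℝ) : ℝ := r * (1 - log r)

@[simp] lemma logLipModulus_zero : logLipModulus 0 = 0 := by simp [logLipModulus]

@[simp] lemma logLipModulus_one : logLipModulus 1 = 1 := by simp [logLipModulus]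

lemma continuous_logLipModulus : Continuous logLipModulus := by
  have : logLipModulus = fun r => r - r * log r := by ext r; simp only [logLipModulus]; ring
  rw [this]
  exact continuous_id.sub continuous_mul_log

lemma logLipModulus_nonneg {r : ℝ} (h0 : 0 ≤ r) (h1 : r ≤ 1) : 0 ≤ logLipModulus r :=
  mul_nonneg h0 (by linarith [log_nonpos h0 h1])

lemma monotoneOn_logLipModulus : MonotoneOn logLipModulus (Icc 0 1) := by
  have hderiv : ∀ r, 0 < r → HasDerivAt logLipModulus (-log r) r := fun r hr =>
    ((hasDerivAt_id' r).mul ((hasDerivAt_log hr.ne').const_sub 1)).congr_deriv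
      (by field_simp; ring)
  refine monotoneOn_of_deriv_nonneg (convex_Icc 0 1) continuous_logLipModulus.continuousOn
    (fun r hr => ?_) (fun r hr => ?_) <;> rw [interior_Icc] at hr
  · exact (hderiv r hr.1).differentiableAt.differentiableWithinAt
  · rw [(hderiv r hr.1).deriv]
    linarith [log_nonpos hr.1.le hr.2.le]

lemma logLipModulus_le_one {r : ℝ} (h0 : 0 ≤ r) (h1 : r ≤ 1) : logLipModulus r ≤ 1 := by
  simpa using monotoneOn_logLipModulus ⟨h0, h1⟩ ⟨zero_le_one, le_rfl⟩ h1

lemma mul_one_add_abs_log_eq {r : ℝ} (h0 : 0 ≤ r) (h1 : r ≤ 1) :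
    r * (1 + |log r|) = logLipModulus r := by
  rw [abs_of_nonpos (log_nonpos h0 h1), logLipModulus, sub_eq_add_neg]

lemma forall_lt_of_first_touch {f g : ℝ → ℝ} {a c : ℝ}
    (hf : ContinuousOn f (Icc a c)) (hg : ContinuousOn g (Icc a c)) (ha : f a < g a)
    (h : ∀ t ∈ Icc a c, (∀ s ∈ Icc a t, f s ≤ g s) → f t < g t) :
    ∀ t ∈ Icc a c, f t < g t := by
  by_contra! hS
  set S := {t ∈ Icc a c | g t ≤ f t}
  have hSc : IsClosed S := isClosed_Icc.isClosed_le hg hf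
  have hbdd : BddBelow S := ⟨a, fun t ht => ht.1.1⟩
  obtain ⟨ht₁, hgf⟩ : sInf S ∈ S := hSc.csInf_mem hS hbdd
  set t₁ := sInf S
  have hat₁ : a < t₁ := ht₁.1.lt_of_ne fun h => by rw [← h] at hgf; linarith
  have hsub : Icc a t₁ ⊆ Icc a c := Icc_subset_Icc_right ht₁.2
  have hbefore : ∀ s ∈ Ico a t₁, f s ≤ g s := fun s hs => le_of_not_ge fun hs' =>
    hs.2.not_ge (csInf_le hbdd ⟨hsub (Ico_subset_Icc_self hs), hs'⟩)
  have hle : ∀ s ∈ Icc a t₁, f s ≤ g s := by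
    rw [← closure_Ico hat₁.ne] at hsub ⊢
    exact le_on_closure hbefore (hf.mono hsub) (hg.mono hsub)
  exact (h t₁ ht₁ hle).not_ge hgf

noncomputable def osgoodBound (K η t : ℝ) : ℝ := exp (1 - (1 - log η) * exp (-K * t))

lemma osgoodBound_zero {K η : ℝ} (hη : 0 < η) : osgoodBound K η 0 = η := by
  simp [osgoodBound, exp_log hη]

lemma hasDerivAt_osgoodBound (K η t : ℝ) :
    HasDerivAt (osgoodBound K η) (K * logLipModulus (osgoodBound K η t)) t := by
  refine ((((hasDerivAt_id' t).const_mul (-K)).exp.const_mul (1 - log η)).const_sub 1).exp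
    |>.congr_deriv ?_
  simp only [logLipModulus, osgoodBound, log_exp]
  ring

lemma continuous_osgoodBound (K η : ℝ) : Continuous (osgoodBound K η) :=
  continuous_iff_continuousAt.2 fun t => (hasDerivAt_osgoodBound K η t).continuousAt

lemma osgoodBound_le_one {K η c t : ℝ} (hK : 0 ≤ K) (ht : t ≤ c)
    (hη : log η ≤ 1 - exp (K * c)) : osgoodBound K η t ≤ 1 := by
  have h : 1 ≤ (1 - log η) * exp (-K * t) := by
    calc (1 : ℝ) = exp (K * t) * exp (-K * t) := by rw [← exp_add]; ring_nf; simp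
      _ ≤ (1 - log η) * exp (-K * t) := by
        gcongr
        linarith [exp_le_exp.2 (mul_le_mul_of_nonneg_left ht hK)]
  exact exp_le_one_iff.2 (by linarith)

lemma osgoodBound_le_rpow {K η : ℝ} (hη : 0 < η) (t : ℝ) :
    osgoodBound K η t ≤ exp 1 * η ^ exp (-K * t) := by
  rw [rpow_def_of_pos hη, ← exp_add, osgoodBound]
  gcongr
  nlinarith [exp_pos (-K * t)]

theorem lt_osgoodBound_of_le_integral {K a c η : ℝ} {f : ℝ → ℝ} (hK : 0 ≤ K)
    (hη : log η ≤ 1 - exp (K * (c - a))) (hf : ContinuousOn f (Icc a c))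
    (hf0 : ∀ t ∈ Icc a c, 0 ≤ f t) (hfa : f a < η)
    (hineq : ∀ t ∈ Icc a c, (∀ s ∈ Icc a t, f s ≤ 1) →
      f t ≤ f a + ∫ s in a..t, K * logLipModulus (f s)) :
    ∀ t ∈ Icc a c, f t < osgoodBound K η (t - a) := by
  intro t ht
  have hη0 : 0 < η := (hf0 a ⟨le_rfl, ht.1.trans ht.2⟩).trans_lt hfa
  set ψ := fun s => osgoodBound K η (s - a)
  have hψc : Continuous ψ := (continuous_osgoodBound K η).comp (continuous_sub_right a)
  have hψ1 : ∀ s ∈ Icc a c, ψ s ≤ 1 := fun s hs =>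
    osgoodBound_le_one hK (sub_le_sub_right hs.2 a) hη
  refine forall_lt_of_first_touch hf hψc.continuousOn (by simpa [ψ, osgoodBound_zero hη0])
    (fun t ht hle => ?_) t ht
  have hsub : Icc a t ⊆ Icc a c := Icc_subset_Icc_right ht.2
  have hint : ∀ g : ℝ → ℝ, ContinuousOn g (Icc a t) →
      IntervalIntegrable (fun s => K * logLipModulus (g s)) volume a t := fun g hg =>
    ((continuous_logLipModulus.comp_continuousOn hg).const_smul K).intervalIntegrable_of_Icc ht.1
  have hmono : ∫ s in a..t, K * logLipModulus (f s) ≤ ∫ s in a..t, K * logLipModulus (ψ s) :=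
    integral_mono_on ht.1 (hint f (hf.mono hsub)) (hint ψ hψc.continuousOn) fun s hs =>
      mul_le_mul_of_nonneg_left (monotoneOn_logLipModulus ⟨hf0 s (hsub hs), (hle s hs).trans
        (hψ1 s (hsub hs))⟩ ⟨(hf0 s (hsub hs)).trans (hle s hs), hψ1 s (hsub hs)⟩ (hle s hs)) hK
  have hftc : ∫ s in a..t, K * logLipModulus (ψ s) = ψ t - η := by
    rw [integral_eq_sub_of_hasDerivAt
      (fun s _ => (hasDerivAt_osgoodBound K η (s - a)).comp_sub_const s a)
      (hint ψ hψc.continuousOn)]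
    simp [ψ, osgoodBound_zero hη0]
  linarith [hineq t ht fun s hs => (hle s hs).trans (hψ1 s (hsub hs))]

theorem le_exp_one_mul_rpow_of_le_integral {K a c : ℝ} {f : ℝ → ℝ} (hK : 0 ≤ K)
    (hf : ContinuousOn f (Icc a c)) (hf0 : ∀ t ∈ Icc a c, 0 ≤ f t)
    (hfa : f a < exp (1 - exp (K * (c - a))))
    (hineq : ∀ t ∈ Icc a c, (∀ s ∈ Icc a t, f s ≤ 1) →
      f t ≤ f a + ∫ s in a..t, K * logLipModulus (f s)) :
    ∀ t ∈ Icc a c, f t ≤ exp 1 * f a ^ exp (-K * (t - a)) := by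
  intro t ht
  have hfa0 : 0 ≤ f a := hf0 a ⟨le_rfl, ht.1.trans ht.2⟩
  have hlim : Tendsto (fun η => exp 1 * η ^ exp (-K * (t - a))) (𝓝[>] (f a))
      (𝓝 (exp 1 * f a ^ exp (-K * (t - a)))) :=
    ((continuousAt_rpow_const _ _ (Or.inr (exp_pos _).le)).tendsto.const_mul _).mono_left
      nhdsWithin_le_nhds
  refine ge_of_tendsto hlim ?_
  filter_upwards [Ioo_mem_nhdsGT hfa] with η hη
  have hη0 : 0 < η := hfa0.trans_lt hη.1
  have hlog : log η ≤ 1 - exp (K * (c - a)) := by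
    simpa using (log_lt_log hη0 hη.2).le
  exact (lt_osgoodBound_of_le_integral hK hlog hf hf0 hη.1 hineq t ht).le.trans
    (osgoodBound_le_rpow hη0 _)

lemma dist_le_of_forall_dist_le {E F : Type*} [NormedAddCommGroup E] [NormedSpace ℝ E]
    [PseudoMetricSpace F] {g : E → F} {φ : ℝ → ℝ} {δ : ℝ}
    (h : ∀ x y, dist x y ≤ δ → dist (g x) (g y) ≤ φ (dist x y)) {n : ℕ} (hn : n ≠ 0) {x y : E}
    (hxy : dist x y ≤ n * δ) : dist (g x) (g y) ≤ n * φ (dist x y / n) := by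
  have hn' : (0 : ℝ) < n := by positivity
  set p : ℕ → E := fun i => y + ((i : ℝ) / n) • (x - y)
  have hstep : ∀ i, dist (p (i + 1)) (p i) = dist x y / n := fun i => by
    simp only [p, dist_eq_norm, add_sub_add_left_eq_sub, ← sub_smul, norm_smul]
    push_cast
    rw [add_div, add_sub_cancel_left, norm_div, norm_one, RCLike.norm_natCast, one_div_mul_eq_div]
  have hp0 : p 0 = y := by simp [p]
  have hpn : p n = x := by simp [p, div_self hn'.ne']
  calc dist (g x) (g y) = dist (g (p 0)) (g (p n)) := by rw [hp0, hpn, dist_comm]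
    _ ≤ ∑ i ∈ Finset.range n, dist (g (p i)) (g (p (i + 1))) :=
      dist_le_range_sum_dist (fun i => g (p i)) n
    _ ≤ ∑ _i ∈ Finset.range n, φ (dist x y / n) := Finset.sum_le_sum fun i _ => by
      rw [dist_comm, ← hstep i]
      exact h _ _ (by rw [hstep, div_le_iff₀ hn']; linarith)
    _ = n * φ (dist x y / n) := by simp

def LogLipschitzWith {α β : Type*} [PseudoMetricSpace α] [PseudoMetricSpace β] (K : ℝ)
    (f : α → β) : Prop :=
  ∀ x y, dist x y ≤ 1 → dist (f x) (f y) ≤ K * logLipModulus (dist x y)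

lemma logLipschitzWith_of_forall_norm_sub_le {E F : Type*} [NormedAddCommGroup E]
    [SeminormedAddCommGroup F] {f : E → F} {K : ℝ}
    (h : ∀ x y, 0 < ‖x - y‖ → ‖x - y‖ ≤ 1 → ‖f x - f y‖ ≤ K * ‖x - y‖ * (1 + |log ‖x - y‖|)) :
    LogLipschitzWith K f := by
  intro x y hxy
  rw [dist_eq_norm] at hxy ⊢
  rcases (norm_nonneg (x - y)).eq_or_lt with h0 | h0
  · obtain rfl : x = y := sub_eq_zero.1 (norm_eq_zero.1 h0.symm)
    simp
  · rw [dist_eq_norm, ← mul_one_add_abs_log_eq h0.le hxy, ← mul_assoc]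
    exact h x y h0 hxy

section LogLipschitz

variable {E F : Type*} [NormedAddCommGroup E] [NormedSpace ℝ E] {K : ℝ}

lemma LogLipschitzWith.dist_le_mul_add_one [PseudoMetricSpace F] {f : E → F}
    (hf : LogLipschitzWith K f) (hK : 0 ≤ K) (x y : E) :
    dist (f x) (f y) ≤ K * (dist x y + 1) := by
  have hunit : ∀ x y : E, dist x y ≤ 1 → dist (f x) (f y) ≤ K := fun x y h =>
    (hf x y h).trans (mul_le_of_le_one_right hK (logLipModulus_le_one dist_nonneg h))
  have h := dist_le_of_forall_dist_le (φ := fun _ => K) hunit (Nat.succ_ne_zero ⌊dist x y⌋₊)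
    (by simpa using (Nat.lt_floor_add_one (dist x y)).le)
  have : (⌊dist x y⌋₊ : ℝ) ≤ dist x y := Nat.floor_le dist_nonneg
  push_cast at h
  nlinarith

lemma LogLipschitzWith.norm_le [SeminormedAddCommGroup F] {f : E → F} (hf : LogLipschitzWith K f)
    (hK : 0 ≤ K) (x : E) : ‖f x‖ ≤ (‖f 0‖ + K) * (1 + ‖x‖) := by
  have h := hf.dist_le_mul_add_one hK x 0
  rw [dist_eq_norm, dist_zero_right] at h
  nlinarith [norm_le_insert' (f x) (f 0), norm_nonneg (f 0), norm_nonneg x]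

end LogLipschitz

def IsIntegralSolutionOn {E : Type*} [NormedAddCommGroup E] [NormedSpace ℝ E]
    (w : ℝ → E → E) (p : E) (a b : ℝ) (x : ℝ → E) : Prop :=
  ContinuousOn x (Icc a b) ∧ ∀ t ∈ Icc a b, x t = p + ∫ s in a..t, w s (x s)

namespace IsIntegralSolutionOn

variable {E : Type*} [NormedAddCommGroup E] [NormedSpace ℝ E] {w : ℝ → E → E} {p q : E}
  {a b : ℝ} {x y : ℝ → E}

lemma left_eq (hx : IsIntegralSolutionOn w p a b x) (hab : a ≤ b) : x a = p := by
  simpa using hx.2 a (left_mem_Icc.2 hab)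

lemma mono (hx : IsIntegralSolutionOn w p a b x) {b' : ℝ} (hb : b' ≤ b) :
    IsIntegralSolutionOn w p a b' x :=
  ⟨hx.1.mono (Icc_subset_Icc_right hb), fun t ht => hx.2 t ⟨ht.1, ht.2.trans hb⟩⟩

lemma hasDerivWithinAt [CompleteSpace E] (hw : Continuous ↿w) (hx : IsIntegralSolutionOn w p a b x)
    {t : ℝ} (ht : t ∈ Icc a b) : HasDerivWithinAt x (w t (x t)) (Icc a b) t := by
  have : Fact (t ∈ Icc a b) := ⟨ht⟩
  have hc := hw.comp_continuousOn (continuousOn_id.prodMk hx.1)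
  refine ((integral_hasDerivWithinAt_right
    ((hc.mono (Icc_subset_Icc_right ht.2)).intervalIntegrable_of_Icc ht.1)
    (hc.stronglyMeasurableAtFilter_nhdsWithin measurableSet_Icc t)
    (hc t ht)).const_add p).congr hx.2 (hx.2 t ht)

lemma glue (hw : Continuous ↿w) {c : ℝ} (hab : a ≤ b) (hbc : b ≤ c)
    (hx : IsIntegralSolutionOn w p a b x) (hy : IsIntegralSolutionOn w (x b) b c y) :
    IsIntegralSolutionOn w p a c (fun t => if t ≤ b then x t else y t) := by
  set z := fun t => if t ≤ b then x t else y t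
  have hzx : EqOn z x (Icc a b) := fun t ht => if_pos ht.2
  have hzy : EqOn z y (Icc b c) := fun t ht => by
    rcases ht.1.eq_or_lt with rfl | hbt
    · simp [z, hy.left_eq hbc]
    · exact if_neg hbt.not_ge
  have hzc : ContinuousOn z (Icc a c) := by
    rw [← Icc_union_Icc_eq_Icc hab hbc]
    exact (hx.1.congr hzx).union_of_isClosed (hy.1.congr hzy) isClosed_Icc isClosed_Icc
  have hint : ∀ {a' b'}, a' ≤ b' → Icc a' b' ⊆ Icc a c →
      IntervalIntegrable (fun s => w s (z s)) volume a' b' := fun h hsub =>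
    ((hw.comp_continuousOn (continuousOn_id.prodMk hzc)).mono hsub).intervalIntegrable_of_Icc h
  have hcongr : ∀ {a' b'} {u : ℝ → E}, a' ≤ b' → EqOn z u (Icc a' b') →
      ∫ s in a'..b', w s (z s) = ∫ s in a'..b', w s (u s) := fun h hzu =>
    integral_congr fun s hs => by rw [uIcc_of_le h] at hs; simp only [hzu hs]
  refine ⟨hzc, fun t ht => ?_⟩
  rcases le_or_gt t b with htb | hbt
  · rw [hzx ⟨ht.1, htb⟩, hx.2 t ⟨ht.1, htb⟩, hcongr ht.1 (hzx.mono (Icc_subset_Icc_right htb))]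
  · rw [hzy ⟨hbt.le, ht.2⟩, hy.2 t ⟨hbt.le, ht.2⟩, hx.2 b ⟨hab, le_rfl⟩,
      ← integral_add_adjacent_intervals (hint hab (Icc_subset_Icc_right hbc))
        (hint hbt.le (Icc_subset_Icc hab ht.2)), hcongr hab hzx,
      hcongr hbt.le (hzy.mono (Icc_subset_Icc_right ht.2)), add_assoc]

lemma hasDerivAt_extend [CompleteSpace E] (hw : Continuous ↿w) (hx : IsIntegralSolutionOn w p a b x)
    {t : ℝ} (ht : t ∈ Ico a b) :
    HasDerivAt (fun s => if a ≤ s then x s else p + (s - a) • w a p) (w t (x t)) t := by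
  have hd := hx.hasDerivWithinAt hw (Ico_subset_Icc_self ht)
  rcases ht.1.eq_or_lt with rfl | hat
  · have hxa : x a = p := hx.left_eq ht.2.le
    have hright : HasDerivWithinAt (fun s => if a ≤ s then x s else p + (s - a) • w a p)
        (w a (x a)) (Ici a) a := (hd.mono_of_mem_nhdsWithin (Icc_mem_nhdsGE ht.2)).congr
      (fun s (hs : a ≤ s) => if_pos hs) (if_pos le_rfl)
    have hleft : HasDerivWithinAt (fun s => if a ≤ s then x s else p + (s - a) • w a p)
        (w a (x a)) (Iic a) a := by
      refine (((((hasDerivAt_id' a).sub_const a).smul_const (w a p)).const_add p).hasDerivWithinAt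
        |>.congr (fun s (hs : s ≤ a) => ?_) (by simp [hxa])).congr_deriv (by simp [hxa])
      rcases hs.eq_or_lt with rfl | hst
      · simp [hxa]
      · exact if_neg hst.not_ge
    simpa [Iic_union_Ici] using hleft.union hright
  · refine (hd.hasDerivAt (Icc_mem_nhds hat ht.2)).congr_of_eventuallyEq ?_
    filter_upwards [Ioi_mem_nhds hat] with s hs
    exact if_pos hs.le

lemma of_hasDerivAt [CompleteSpace E] (hw : Continuous ↿w)
    (hx : ∀ t ∈ Icc a b, HasDerivAt x (w t (x t)) t) : IsIntegralSolutionOn w (x a) a b x := by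
  have hc : ContinuousOn x (Icc a b) := fun t ht => (hx t ht).continuousAt.continuousWithinAt
  refine ⟨hc, fun t ht => ?_⟩
  have hsub : Icc a t ⊆ Icc a b := Icc_subset_Icc_right ht.2
  rw [integral_eq_sub_of_hasDerivAt (fun s hs => hx s (hsub (uIcc_of_le ht.1 ▸ hs)))
    ((hw.comp_continuousOn (continuousOn_id.prodMk hc)).mono hsub |>.intervalIntegrable_of_Icc
      ht.1), add_sub_cancel]

lemma dist_le_integral [CompleteSpace E] (hw : Continuous ↿w) {K : ℝ}
    (hlip : ∀ s ∈ Icc a b, LogLipschitzWith K (w s)) (hx : IsIntegralSolutionOn w p a b x)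
    (hy : IsIntegralSolutionOn w q a b y) {t : ℝ} (ht : t ∈ Icc a b)
    (h1 : ∀ s ∈ Icc a t, dist (x s) (y s) ≤ 1) :
    dist (x t) (y t) ≤ dist p q + ∫ s in a..t, K * logLipModulus (dist (x s) (y s)) := by
  have hsub : Icc a t ⊆ Icc a b := Icc_subset_Icc_right ht.2
  have hint : ∀ {u : ℝ → E}, ContinuousOn u (Icc a b) →
      IntervalIntegrable (fun s => w s (u s)) volume a t := fun hu =>
    ((hw.comp_continuousOn (continuousOn_id.prodMk hu)).mono hsub).intervalIntegrable_of_Icc ht.1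
  have heq : x t - y t = (p - q) + ∫ s in a..t, (w s (x s) - w s (y s)) := by
    rw [hx.2 t ht, hy.2 t ht, integral_sub (hint hx.1) (hint hy.1)]
    abel
  rw [dist_eq_norm, heq, dist_eq_norm]
  refine (norm_add_le _ _).trans (add_le_add le_rfl
    ((intervalIntegral.norm_integral_le_integral_norm ht.1).trans
      (integral_mono_on ht.1 ((hint hx.1).sub (hint hy.1)).norm ?_ fun s hs => ?_)))
  · exact (((continuous_logLipModulus.comp_continuousOn
      (continuous_dist.comp_continuousOn (hx.1.prodMk hy.1))).const_smul K).mono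
        hsub).intervalIntegrable_of_Icc ht.1
  · rw [← dist_eq_norm]
    exact hlip s (hsub hs) _ _ (h1 s hs)

theorem dist_le [CompleteSpace E] (hw : Continuous ↿w) {K : ℝ} (hK : 0 ≤ K)
    (hlip : ∀ s ∈ Icc a b, LogLipschitzWith K (w s)) (hx : IsIntegralSolutionOn w p a b x)
    (hy : IsIntegralSolutionOn w q a b y) (hpq : dist p q < exp (1 - exp (K * (b - a))))
    {t : ℝ} (ht : t ∈ Icc a b) : dist (x t) (y t) ≤ exp 1 * dist p q ^ exp (-K * (t - a)) := by
  have hab := ht.1.trans ht.2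
  have hxy : dist (x a) (y a) = dist p q := by rw [hx.left_eq hab, hy.left_eq hab]
  have := le_exp_one_mul_rpow_of_le_integral (f := fun t => dist (x t) (y t)) hK
    (continuous_dist.comp_continuousOn (hx.1.prodMk hy.1)) (fun _ _ => dist_nonneg) (hxy ▸ hpq)
    (fun t ht h1 => hxy ▸ hx.dist_le_integral hw hlip hy ht h1) t ht
  rwa [hxy] at this

theorem eqOn [CompleteSpace E] (hw : Continuous ↿w) {K : ℝ} (hK : 0 ≤ K)
    (hlip : ∀ s ∈ Icc a b, LogLipschitzWith K (w s)) (hx : IsIntegralSolutionOn w p a b x)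
    (hy : IsIntegralSolutionOn w p a b y) : EqOn x y (Icc a b) := fun t ht =>
  dist_le_zero.1 <| by
    simpa [zero_rpow (exp_pos _).ne'] using hx.dist_le hw hK hlip hy (by simp [exp_pos]) ht

end IsIntegralSolutionOn

lemma continuousOn_primitive_of_norm_le {E : Type*} [NormedAddCommGroup E] [NormedSpace ℝ E]
    {g : ℝ → E} {a b M : ℝ} (hg : AEStronglyMeasurable g (volume.restrict (Icc a b)))
    (hM : ∀ s ∈ Icc a b, ‖g s‖ ≤ M) : ContinuousOn (fun t => ∫ s in a..t, g s) (Icc a b) := by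
  rcases le_or_gt a b with hab | hba
  · rw [← uIcc_of_le hab] at hg hM ⊢
    exact continuousOn_primitive_interval ⟨hg, .restrict_of_bounded M measure_Icc_lt_top
      (ae_restrict_of_forall_mem measurableSet_uIcc hM)⟩
  · simp [Icc_eq_empty_of_lt hba]

section Picard

variable {E : Type*} [NormedAddCommGroup E] [NormedSpace ℝ E]
  {w : ℝ → E → E} {p : E} {K B s₀ τ : ℝ}

noncomputable def picard (w : ℝ → E → E) (p : E) (s₀ : ℝ) : ℕ → ℝ → E
  | 0 => fun _ => p
  | n + 1 => fun t => p + ∫ s in s₀..t, w s (picard w p s₀ n s)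

noncomputable def osgoodIter (K s₀ : ℝ) : ℕ → ℝ → ℝ
  | 0 => fun _ => 1
  | n + 1 => fun t => ∫ s in s₀..t, K * logLipModulus (osgoodIter K s₀ n s)

lemma continuous_picard (hw : Continuous ↿w) (n : ℕ) : Continuous (picard w p s₀ n) := by
  induction n with
  | zero => exact continuous_const
  | succ n ih =>
    exact continuous_const.add (continuous_primitive
      (fun a b => (hw.comp (continuous_id.prodMk ih)).intervalIntegrable a b) s₀)

lemma continuous_osgoodIter (n : ℕ) : Continuous (osgoodIter K s₀ n) := by
  induction n with
  | zero => exact continuous_const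
  | succ n ih =>
    exact continuous_primitive (fun a b =>
      ((continuous_logLipModulus.comp ih).const_smul K).intervalIntegrable a b) s₀

lemma osgoodIter_mem_Icc (hK : 0 ≤ K) (hτK : τ * K ≤ 1) (n : ℕ) :
    ∀ t ∈ Icc s₀ (s₀ + τ), osgoodIter K s₀ n t ∈ Icc 0 1 := by
  induction n with
  | zero => simp [osgoodIter]
  | succ n ih =>
    intro t ht
    have hω : ∀ s ∈ Icc s₀ t, K * logLipModulus (osgoodIter K s₀ n s) ∈ Icc 0 K := fun s hs =>
      have h := ih s ⟨hs.1, hs.2.trans ht.2⟩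
      ⟨mul_nonneg hK (logLipModulus_nonneg h.1 h.2),
        mul_le_of_le_one_right hK (logLipModulus_le_one h.1 h.2)⟩
    refine ⟨integral_nonneg ht.1 fun s hs => (hω s hs).1, ?_⟩
    calc osgoodIter K s₀ (n + 1) t ≤ ∫ _ in s₀..t, K :=
          integral_mono_on ht.1 (((continuous_logLipModulus.comp
            (continuous_osgoodIter n)).const_smul K).intervalIntegrable _ _)
            intervalIntegrable_const fun s hs => (hω s hs).2
      _ = K * (t - s₀) := by simp [mul_comm]
      _ ≤ 1 := by nlinarith [ht.1, ht.2]

lemma osgoodIter_succ_le (hK : 0 ≤ K) (hτK : τ * K ≤ 1) (n : ℕ) :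
    ∀ t ∈ Icc s₀ (s₀ + τ), osgoodIter K s₀ (n + 1) t ≤ osgoodIter K s₀ n t := by
  induction n with
  | zero => exact fun t ht => (osgoodIter_mem_Icc hK hτK 1 t ht).2
  | succ n ih =>
    intro t ht
    have hint : ∀ m, IntervalIntegrable (fun s => K * logLipModulus (osgoodIter K s₀ m s))
        volume s₀ t := fun m =>
      ((continuous_logLipModulus.comp (continuous_osgoodIter m)).const_smul K).intervalIntegrable
        _ _
    refine integral_mono_on ht.1 (hint _) (hint _) fun s hs => ?_
    have hsI : s ∈ Icc s₀ (s₀ + τ) := ⟨hs.1, hs.2.trans ht.2⟩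
    exact mul_le_mul_of_nonneg_left (monotoneOn_logLipModulus (osgoodIter_mem_Icc hK hτK _ s hsI)
      (osgoodIter_mem_Icc hK hτK _ s hsI) (ih s hsI)) hK

lemma tendsto_osgoodIter (hK : 0 ≤ K) (hτK : τ * K ≤ 1) {t : ℝ} (ht : t ∈ Icc s₀ (s₀ + τ)) :
    Tendsto (fun n => osgoodIter K s₀ n t) atTop (𝓝 0) := by
  set I := Icc s₀ (s₀ + τ)
  set β := fun t => ⨅ n, osgoodIter K s₀ n t
  have hmem := osgoodIter_mem_Icc (s₀ := s₀) hK hτK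
  have hlim : ∀ t ∈ I, Tendsto (fun n => osgoodIter K s₀ n t) atTop (𝓝 (β t)) := fun t ht =>
    tendsto_atTop_ciInf (antitone_nat_of_succ_le fun n => osgoodIter_succ_le hK hτK n t ht)
      ⟨0, by rintro _ ⟨n, rfl⟩; exact (hmem n t ht).1⟩
  have hβI : ∀ t ∈ I, β t ∈ Icc 0 1 := fun t ht =>
    ⟨ge_of_tendsto' (hlim t ht) fun n => (hmem n t ht).1,
      le_of_tendsto' (hlim t ht) fun n => (hmem n t ht).2⟩
  have hbound : ∀ {r : ℝ}, r ∈ Icc 0 1 → ‖K * logLipModulus r‖ ≤ K := fun hr => by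
    rw [norm_of_nonneg (mul_nonneg hK (logLipModulus_nonneg hr.1 hr.2))]
    exact mul_le_of_le_one_right hK (logLipModulus_le_one hr.1 hr.2)
  have hβeq : ∀ t ∈ I, β t = ∫ s in s₀..t, K * logLipModulus (β s) := fun t ht => by
    refine tendsto_nhds_unique ((hlim t ht).comp (tendsto_add_atTop_nat 1)) ?_
    refine tendsto_integral_filter_of_dominated_convergence (fun _ => K)
      (Eventually.of_forall fun n => ((continuous_logLipModulus.comp
        (continuous_osgoodIter n)).const_smul K).aestronglyMeasurable)
      (Eventually.of_forall fun n => ae_of_all _ fun s hs => ?_) intervalIntegrable_const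
      (ae_of_all _ fun s hs => ?_) <;>
    rw [uIoc_of_le ht.1] at hs <;>
    have hsI : s ∈ I := ⟨hs.1.le, hs.2.trans ht.2⟩
    · exact hbound (hmem n s hsI)
    · exact ((continuous_logLipModulus.tendsto _).comp (hlim s hsI)).const_mul K
  have hβc : ContinuousOn β I := by
    refine (continuousOn_primitive_of_norm_le (M := K) ?_ fun s hs => hbound (hβI s hs)).congr
      hβeq
    exact ((continuous_logLipModulus.measurable.comp (Measurable.iInf fun n =>
      (continuous_osgoodIter n).measurable)).const_mul K).aestronglyMeasurable
  have hβ0 : β s₀ = 0 := by simpa using hβeq s₀ (left_mem_Icc.2 (ht.1.trans ht.2))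
  have h := le_exp_one_mul_rpow_of_le_integral hK hβc (fun t ht => (hβI t ht).1)
    (by rw [hβ0]; exact exp_pos _) (fun t ht _ => by rw [hβ0, zero_add]; exact (hβeq t ht).le) t ht
  rw [hβ0, zero_rpow (exp_pos _).ne', mul_zero] at h
  simpa [le_antisymm h (hβI t ht).1] using hlim t ht

lemma norm_picard_sub_le (hB : ∀ s ∈ Icc s₀ (s₀ + τ), ∀ x ∈ closedBall p 1, ‖w s x‖ ≤ B)
    (hτB : τ * B ≤ 1) (n : ℕ) :
    ∀ t ∈ Icc s₀ (s₀ + τ), ‖picard w p s₀ n t - p‖ ≤ B * (t - s₀) := by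
  intro t ht
  have hB0 : 0 ≤ B :=
    (norm_nonneg _).trans
      (hB s₀ (left_mem_Icc.2 (ht.1.trans ht.2)) p (mem_closedBall_self zero_le_one))
  induction n generalizing t with
  | zero => simpa [picard] using mul_nonneg hB0 (sub_nonneg.2 ht.1)
  | succ n ih =>
    simp only [picard, add_sub_cancel_left]
    refine (intervalIntegral.norm_integral_le_of_norm_le_const fun s hs => ?_).trans_eq
      (by rw [abs_of_nonneg (sub_nonneg.2 ht.1)])
    rw [uIoc_of_le ht.1] at hs
    have hsI : s ∈ Icc s₀ (s₀ + τ) := ⟨hs.1.le, hs.2.trans ht.2⟩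
    refine hB s hsI _ (mem_closedBall_iff_norm.2 ((ih s hsI).trans ?_))
    nlinarith [hsI.2]

lemma picard_mem_closedBall (hB : ∀ s ∈ Icc s₀ (s₀ + τ), ∀ x ∈ closedBall p 1, ‖w s x‖ ≤ B)
    (hτB : τ * B ≤ 1) (n : ℕ) {t : ℝ} (ht : t ∈ Icc s₀ (s₀ + τ)) :
    picard w p s₀ n t ∈ closedBall p 1 := by
  have hB0 : 0 ≤ B :=
    (norm_nonneg _).trans
      (hB s₀ (left_mem_Icc.2 (ht.1.trans ht.2)) p (mem_closedBall_self zero_le_one))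
  refine mem_closedBall_iff_norm.2 ((norm_picard_sub_le hB hτB n t ht).trans ?_)
  nlinarith [ht.2]

lemma norm_picard_sub_picard_le [CompleteSpace E] (hw : Continuous ↿w) (hK : 0 ≤ K)
    (hlip : ∀ s, LogLipschitzWith K (w s)) (hτK : τ * K ≤ 1)
    (hB : ∀ s ∈ Icc s₀ (s₀ + τ), ∀ x ∈ closedBall p 1, ‖w s x‖ ≤ B) (hτB : τ * B ≤ 1)
    (n m : ℕ) : ∀ t ∈ Icc s₀ (s₀ + τ),
      ‖picard w p s₀ (n + m) t - picard w p s₀ n t‖ ≤ osgoodIter K s₀ n t := by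
  induction n with
  | zero =>
    intro t ht
    simpa [picard, osgoodIter, dist_eq_norm] using picard_mem_closedBall hB hτB m ht
  | succ n ih =>
    intro t ht
    have hint : ∀ k, IntervalIntegrable (fun s => w s (picard w p s₀ k s)) volume s₀ t := fun k =>
      (hw.comp (continuous_id.prodMk (continuous_picard hw k))).intervalIntegrable _ _
    rw [Nat.add_right_comm]
    simp only [picard, add_sub_add_left_eq_sub]
    rw [← integral_sub (hint _) (hint _)]
    refine (intervalIntegral.norm_integral_le_integral_norm ht.1).trans (integral_mono_on ht.1
      ((hint _).sub (hint _)).norm (((continuous_logLipModulus.comp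
        (continuous_osgoodIter n)).const_smul K).intervalIntegrable _ _) fun s hs => ?_)
    have hsI : s ∈ Icc s₀ (s₀ + τ) := ⟨hs.1, hs.2.trans ht.2⟩
    have hd := ih s hsI
    have hb := osgoodIter_mem_Icc hK hτK n s hsI
    rw [← dist_eq_norm] at hd ⊢
    exact (hlip s _ _ (hd.trans hb.2)).trans (mul_le_mul_of_nonneg_left
      (monotoneOn_logLipModulus ⟨dist_nonneg, hd.trans hb.2⟩ hb hd) hK)

theorem exists_isIntegralSolutionOn_of_norm_le_closedBall [CompleteSpace E] (hw : Continuous ↿w)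
    (hK : 0 ≤ K) (hlip : ∀ s, LogLipschitzWith K (w s)) (hτK : τ * K ≤ 1)
    (hB : ∀ s ∈ Icc s₀ (s₀ + τ), ∀ x ∈ closedBall p 1, ‖w s x‖ ≤ B) (hτB : τ * B ≤ 1) :
    ∃ x, IsIntegralSolutionOn w p s₀ (s₀ + τ) x ∧
      ∀ t ∈ Icc s₀ (s₀ + τ), ‖x t - p‖ ≤ B * (t - s₀) := by
  set I := Icc s₀ (s₀ + τ)
  set X := picard w p s₀
  set x := fun t => limUnder atTop fun n => X n t
  have hX : ∀ t ∈ I, Tendsto (fun n => X n t) atTop (𝓝 (x t)) := fun t ht =>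
    (cauchySeq_of_le_tendsto_0' _ (fun n m hnm => by
      obtain ⟨k, rfl⟩ := Nat.exists_eq_add_of_le hnm
      rw [dist_comm, dist_eq_norm]
      exact norm_picard_sub_picard_le hw hK hlip hτK hB hτB n k t ht)
      (tendsto_osgoodIter hK hτK ht)).tendsto_limUnder
  have hXc : ∀ n, Continuous fun s => w s (X n s) := fun n =>
    hw.comp (continuous_id.prodMk (continuous_picard hw n))
  have hwx : ∀ s ∈ I, Tendsto (fun n => w s (X n s)) atTop (𝓝 (w s (x s))) := fun s hs =>
    (hw.tendsto (s, x s)).comp (tendsto_const_nhds.prodMk_nhds (hX s hs))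
  have hwB : ∀ s ∈ I, ‖w s (x s)‖ ≤ B := fun s hs => hB s hs _ <|
    isClosed_closedBall.mem_of_tendsto (hX s hs)
      (Eventually.of_forall fun n => picard_mem_closedBall hB hτB n hs)
  have heq : ∀ t ∈ I, x t = p + ∫ s in s₀..t, w s (x s) := fun t ht => by
    have hsub : ∀ s ∈ uIoc s₀ t, s ∈ I := fun s hs => by
      rw [uIoc_of_le ht.1] at hs
      exact ⟨hs.1.le, hs.2.trans ht.2⟩
    refine tendsto_nhds_unique ((hX t ht).comp (tendsto_add_atTop_nat 1)) ?_
    exact (tendsto_integral_filter_of_dominated_convergence (fun _ => B)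
      (Eventually.of_forall fun n => (hXc n).aestronglyMeasurable)
      (Eventually.of_forall fun n => ae_of_all _ fun s hs =>
        hB s (hsub s hs) _ (picard_mem_closedBall hB hτB n (hsub s hs)))
      intervalIntegrable_const (ae_of_all _ fun s hs => hwx s (hsub s hs))).const_add p
  have hxc : ContinuousOn x I :=
    (continuousOn_const.add (continuousOn_primitive_of_norm_le
      (aestronglyMeasurable_of_tendsto_ae atTop (fun n => (hXc n).aestronglyMeasurable)
        (ae_restrict_of_forall_mem measurableSet_Icc hwx)) hwB)).congr heq
  exact ⟨x, ⟨hxc, heq⟩, fun t ht => le_of_tendsto ((hX t ht).sub_const p).norm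
    (Eventually.of_forall fun n => norm_picard_sub_le hB hτB n t ht)⟩

lemma exists_isIntegralSolutionOn_add_mul [CompleteSpace E] (hw : Continuous ↿w) (hK : 0 ≤ K)
    (hlip : ∀ s, LogLipschitzWith K (w s)) {A R : ℝ} (hA : 0 ≤ A)
    (hgrowth : ∀ s x, ‖w s x‖ ≤ A * (1 + ‖x‖)) (hτ : 0 ≤ τ) (hτK : τ * K ≤ 1)
    (hτR : τ * (A * R) ≤ 1) (a : ℝ) (k : ℕ) (hR : (2 + ‖p‖) * exp (A * (k * τ)) ≤ R) :
    ∃ x, IsIntegralSolutionOn w p a (a + k * τ) x ∧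
      ∀ t ∈ Icc a (a + k * τ), 2 + ‖x t‖ ≤ (2 + ‖p‖) * exp (A * (t - a)) := by
  induction k with
  | zero =>
    refine ⟨fun _ => p, ⟨continuousOn_const, fun t ht => ?_⟩, fun t ht => ?_⟩ <;>
    obtain rfl : t = a := by simpa using ht
    all_goals simp
  | succ k ih =>
    have hkR : (2 + ‖p‖) * exp (A * (k * τ)) ≤ R :=
      le_trans (by gcongr; simp) hR
    obtain ⟨x, hx, hxb⟩ := ih hkR
    set s₁ := a + k * τ
    have hq : 2 + ‖x s₁‖ ≤ (2 + ‖p‖) * exp (A * (k * τ)) := by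
      simpa [s₁] using hxb s₁ ⟨by simp [s₁]; positivity, le_rfl⟩
    have hB : ∀ s ∈ Icc s₁ (s₁ + τ), ∀ z ∈ closedBall (x s₁) 1, ‖w s z‖ ≤ A * (2 + ‖x s₁‖) :=
      fun s _ z hz => (hgrowth s z).trans (mul_le_mul_of_nonneg_left
        (by linarith [norm_le_norm_add_norm_sub' z (x s₁), mem_closedBall_iff_norm.1 hz]) hA)
    obtain ⟨y, hy, hyb⟩ := exists_isIntegralSolutionOn_of_norm_le_closedBall hw hK hlip hτK hB
      (le_trans (by gcongr; linarith) hτR)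
    have hglue := hx.glue hw (by simp [s₁]; positivity) (by linarith) hy
    rw [show s₁ + τ = a + ↑(k + 1) * τ by push_cast [s₁]; ring] at hglue
    refine ⟨_, hglue, fun t ht => ?_⟩
    by_cases hts : t ≤ s₁
    · simpa [hts] using hxb t ⟨ht.1, hts⟩
    · have ht' : t ∈ Icc s₁ (s₁ + τ) := ⟨(not_le.1 hts).le, by push_cast at ht; linarith [ht.2]⟩
      simp only [hts, if_false]
      calc 2 + ‖y t‖ ≤ (2 + ‖x s₁‖) * (1 + A * (t - s₁)) := by
            nlinarith [norm_le_norm_add_norm_sub' (y t) (x s₁), hyb t ht']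
        _ ≤ (2 + ‖p‖) * exp (A * (k * τ)) * exp (A * (t - s₁)) := by
            gcongr
            · nlinarith [ht'.1]
            · linarith [add_one_le_exp (A * (t - s₁))]
        _ = (2 + ‖p‖) * exp (A * (t - a)) := by
            rw [mul_assoc, ← exp_add]; congr 2; simp only [s₁]; ring

theorem exists_isIntegralSolutionOn [CompleteSpace E] (hw : Continuous ↿w) (hK : 0 ≤ K)
    (hlip : ∀ s, LogLipschitzWith K (w s)) {A : ℝ} (hA : 0 ≤ A)
    (hgrowth : ∀ s x, ‖w s x‖ ≤ A * (1 + ‖x‖)) (p : E) (a b : ℝ) :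
    ∃ x, IsIntegralSolutionOn w p a b x := by
  set R := (2 + ‖p‖) * exp (A * (|b - a| + 1))
  have hAR : 0 ≤ A * R := by positivity
  set τ := 1 / (A * R + K + 1)
  have hτ : 0 < τ := by positivity
  have hτle : ∀ {r}, 0 ≤ r → r ≤ A * R + K → τ * r ≤ 1 := fun h0 h1 => by
    rw [one_div_mul_eq_div, div_le_one (by positivity)]
    linarith
  set k := ⌈|b - a| / τ⌉₊
  have hk : |b - a| ≤ k * τ := (div_le_iff₀ hτ).1 (Nat.le_ceil _)
  have hkτ : k * τ ≤ |b - a| + 1 := by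
    have h : (k : ℝ) * τ < (|b - a| / τ + 1) * τ :=
      mul_lt_mul_of_pos_right (Nat.ceil_lt_add_one (by positivity)) hτ
    have hτ1 : τ ≤ 1 := (div_le_one (by positivity)).2 (by linarith)
    rw [add_mul, div_mul_cancel₀ _ hτ.ne', one_mul] at h
    linarith
  obtain ⟨x, hx, -⟩ := exists_isIntegralSolutionOn_add_mul hw hK hlip hA hgrowth hτ.le
    (hτle hK (by linarith)) (hτle hAR (by linarith)) a k
    (show _ ≤ (2 + ‖p‖) * exp (A * (|b - a| + 1)) by gcongr)
  exact ⟨x, hx.mono (by linarith [le_abs_self (b - a)])⟩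

end Picard

theorem exists_eq_forall_mem_Icc_hasDerivAt {E : Type*} [NormedAddCommGroup E]
    [NormedSpace ℝ E] [CompleteSpace E] {u : ℝ → E → E} {a b K : ℝ} (hu : Continuous ↿u)
    (hab : a ≤ b) (hK : 0 ≤ K) (hlip : ∀ s ∈ Icc a b, LogLipschitzWith K (u s)) (p : E) :
    ∃ x : ℝ → E, x a = p ∧ ∀ t ∈ Icc a b, HasDerivAt x (u t (x t)) t := by
  -- Freezing the field outside `[a, b]` gives solutions on a neighbourhood of `[a, b]`.
  set v := fun s => u (projIcc a b hab s)
  have hv : Continuous ↿v := hu.comp (((continuous_subtype_val.comp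
    (continuous_projIcc (h := hab))).comp continuous_fst).prodMk continuous_snd)
  have hvu : ∀ s ∈ Icc a b, v s = u s := fun s hs => by simp [v, projIcc_of_mem _ hs]
  have hvlip : ∀ s, LogLipschitzWith K (v s) := fun s => hlip _ (projIcc a b hab s).2
  obtain ⟨M, hM⟩ := (isCompact_Icc (a := a) (b := b)).exists_bound_of_continuousOn
    (f := fun s => u s 0) (hu.comp (continuous_id.prodMk continuous_const)).continuousOn
  have hgrowth : ∀ s x, ‖v s x‖ ≤ (M + K) * (1 + ‖x‖) := fun s x =>
    ((hvlip s).norm_le hK x).trans (by gcongr; exact hM _ (projIcc a b hab s).2)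
  obtain ⟨x, hx⟩ := exists_isIntegralSolutionOn hv hK hvlip
    (by linarith [(norm_nonneg _).trans (hM a (left_mem_Icc.2 hab))]) hgrowth p a (b + 1)
  have hxa : x a = p := hx.left_eq (by linarith)
  refine ⟨fun t => if a ≤ t then x t else p + (t - a) • v a p, by simpa using hxa, fun t ht => ?_⟩
  exact (hx.hasDerivAt_extend hv ⟨ht.1, by linarith [ht.2]⟩).congr_deriv (by simp [ht.1, hvu t ht])

theorem exists_dist_le_mul_rpow {E : Type*} [NormedAddCommGroup E] [NormedSpace ℝ E]
    [CompleteSpace E] {u : ℝ → E → E} {a b K : ℝ} (hu : Continuous ↿u) (hK : 0 ≤ K)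
    (hlip : ∀ s ∈ Icc a b, LogLipschitzWith K (u s)) {x : E → ℝ → E}
    (hx : ∀ y, IsIntegralSolutionOn u y a b (x y)) :
    ∃ C > 0, ∀ t ∈ Icc a b, ∀ y z, dist y z ≤ 1 →
      dist (x y t) (x z t) ≤ C * dist y z ^ exp (-K * (t - a)) := by
  set δ := exp (1 - exp (K * (b - a))) / 2
  have hδ : 0 < δ := by positivity
  set n := ⌈δ⁻¹⌉₊
  have hn : (1 : ℝ) ≤ n := Nat.one_le_cast.2 (Nat.ceil_pos.2 (inv_pos.2 hδ))
  refine ⟨n * exp 1, by positivity, fun t ht y z hyz => ?_⟩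
  have hyz' : dist y z ≤ n * δ := hyz.trans <| calc
    1 = δ⁻¹ * δ := (inv_mul_cancel₀ hδ.ne').symm
    _ ≤ n * δ := by gcongr; exact Nat.le_ceil _
  calc dist (x y t) (x z t) ≤ n * (exp 1 * (dist y z / n) ^ exp (-K * (t - a))) :=
        dist_le_of_forall_dist_le (g := fun y => x y t)
          (φ := fun r => exp 1 * r ^ exp (-K * (t - a)))
          (fun y z h => (hx y).dist_le hu hK hlip (hx z) (h.trans_lt (half_lt_self (exp_pos _))) ht)
          (by positivity) hyz'
    _ ≤ n * (exp 1 * dist y z ^ exp (-K * (t - a))) := by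
        gcongr
        exact div_le_self dist_nonneg hn
    _ = n * exp 1 * dist y z ^ exp (-K * (t - a)) := by ring

/-- Osgood-type flow of a log-Lipschitz vector field: unique solvability of
`ẋ = u(x,t)`, `x(0) = y` on `[0,T]`, and Hölder continuity of the flow map with
exponent `α(t) = e^{-Lt}`. -/
theorem stmt_16 (T L : ℝ) (hT : 0 < T) (hL : 0 < L)
    (u : ℝ → EuclideanSpace ℝ (Fin 3) → EuclideanSpace ℝ (Fin 3))
    (hcont : Continuous fun p : ℝ × EuclideanSpace ℝ (Fin 3) => u p.1 p.2)
    (hlip : ∀ t ∈ Set.Icc (0 : ℝ) T, ∀ x y : EuclideanSpace ℝ (Fin 3),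
      0 < ‖x - y‖ → ‖x - y‖ ≤ 1 →
      ‖u t x - u t y‖ ≤ L * ‖x - y‖ * (1 + |Real.log ‖x - y‖|)) :
    ∃ flow : ℝ → EuclideanSpace ℝ (Fin 3) → EuclideanSpace ℝ (Fin 3),
      (∀ y, flow 0 y = y) ∧
      (∀ y, ∀ t ∈ Set.Icc (0 : ℝ) T,
        HasDerivAt (fun s => flow s y) (u t (flow t y)) t) ∧
      (∀ (y : EuclideanSpace ℝ (Fin 3)) (g : ℝ → EuclideanSpace ℝ (Fin 3)),
        g 0 = y → (∀ t ∈ Set.Icc (0 : ℝ) T, HasDerivAt g (u t (g t)) t) →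
        ∀ t ∈ Set.Icc (0 : ℝ) T, g t = flow t y) ∧
      ∃ C > (0 : ℝ), ∀ t ∈ Set.Icc (0 : ℝ) T, ∀ y z : EuclideanSpace ℝ (Fin 3),
        ‖y - z‖ ≤ 1 →
        ‖flow t y - flow t z‖ ≤ C * ‖y - z‖ ^ (Real.exp (-L * t)) := by
  have hu : Continuous ↿u := hcont
  have hulip : ∀ s ∈ Icc 0 T, LogLipschitzWith L (u s) := fun s hs =>
    logLipschitzWith_of_forall_norm_sub_le (hlip s hs)
  choose F hF0 hF using fun y => exists_eq_forall_mem_Icc_hasDerivAt hu hT.le hL.le hulip y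
  have hFsol : ∀ y, IsIntegralSolutionOn u y 0 T (F y) := fun y => by
    simpa only [hF0] using IsIntegralSolutionOn.of_hasDerivAt hu (hF y)
  obtain ⟨C, hC, hCF⟩ := exists_dist_le_mul_rpow hu hL.le hulip hFsol
  refine ⟨fun t y => F y t, hF0, hF, fun y g hg0 hg t ht => ?_, C, hC, fun t ht y z hyz => ?_⟩
  · exact IsIntegralSolutionOn.eqOn hu hL.le hulip (hg0 ▸ .of_hasDerivAt hu hg) (hFsol y) ht
  · simpa [dist_eq_norm] using hCF t ht y z (by rwa [dist_eq_norm])
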